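/- arXiv:2512.09464 — 6 statements merged into one kernel-verified Lean document; each statement's English description precedes it below -/
import Mathlib

section
/- For all natural numbers j and n, the map lb j n : Ltm j (n+1) → Ltm (j+1) n is a bijection; that is, there is an equivalence Ltm j (n+1) ≃ Ltm (j+1) n whose forward map is lb j n, and moreover lb is the unique family of functions satisfying its five defining clauses. (This is the set-level, de Bruijn counterpart of the paper's Theorem 4.2 equivalence sflb_j : (∫ ⊸ Ltm_j) ≃ Ltm_{j+1}, stating that name-abstracted λ-terms with j holes are the same as λ-terms with j+1 holes.) -/
/-- Well-scoped de Bruijn λ-terms with `j` holes and `n` free variables. -/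
inductive Ltm (j : ℕ) : ℕ → Type where
  | holes {n : ℕ} : Fin j → Ltm j n
  | var {n : ℕ} : Fin n → Ltm j n
  | app {n : ℕ} : Ltm j n → Ltm j n → Ltm j n
  | lam {n : ℕ} : Ltm j (n + 1) → Ltm j n

/-- The shift map binding the last variable as hole `0`. -/
def lb (j : ℕ) : (n : ℕ) → Ltm j (n + 1) → Ltm (j + 1) n
  | n, .var i =>
      Fin.lastCases (motive := fun _ => Ltm (j + 1) n)
        (Ltm.holes 0) (fun i => Ltm.var i) i
  | _, .holes k => .holes k.succ
  | n, .app u v => .app (lb j n u) (lb j n v)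
  | n, .lam t => .lam (lb j (n + 1) t)

/-- The five defining clauses of `lb`. -/
def LbClauses (f : (j n : ℕ) → Ltm j (n + 1) → Ltm (j + 1) n) : Prop :=
  (∀ j n, f j n (.var (Fin.last n)) = .holes 0) ∧
  (∀ j n (i : Fin n), f j n (.var i.castSucc) = .var i) ∧
  (∀ j n (k : Fin j), f j n (.holes k) = .holes k.succ) ∧
  (∀ j n (u v : Ltm j (n + 1)), f j n (.app u v) = .app (f j n u) (f j n v)) ∧
  (∀ j n (t : Ltm j (n + 2)), f j n (.lam t) = .lam (f j (n + 1) t))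

/-- Inverse of `lb`. -/
def lbInv (j : ℕ) : (n : ℕ) → Ltm (j + 1) n → Ltm j (n + 1)
  | n, .holes k =>
      Fin.cases (motive := fun _ => Ltm j (n + 1))
        (Ltm.var (Fin.last n)) (fun k => Ltm.holes k) k
  | _, .var i => .var i.castSucc
  | n, .app u v => .app (lbInv j n u) (lbInv j n v)
  | n, .lam t => .lam (lbInv j (n + 1) t)

theorem lb_lbInv (j : ℕ) : ∀ n (t : Ltm (j + 1) n), lb j n (lbInv j n t) = t
  | n, .holes k => by cases k using Fin.cases <;> simp [lbInv, lb]
  | _, .var i => by simp [lbInv, lb]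
  | n, .app u v => by simp [lbInv, lb, lb_lbInv j n u, lb_lbInv j n v]
  | n, .lam t => by simp [lbInv, lb, lb_lbInv j (n + 1) t]

theorem lbInv_lb (j : ℕ) : ∀ n (t : Ltm j (n + 1)), lbInv j n (lb j n t) = t
  | _, .holes k => by simp [lb, lbInv]
  | n, .var i => by cases i using Fin.lastCases <;> simp [lb, lbInv]
  | n, .app u v => by simp [lb, lbInv, lbInv_lb j n u, lbInv_lb j n v]
  | n, .lam t => by simp [lb, lbInv, lbInv_lb j (n + 1) t]

theorem lb_clauses : LbClauses lb := by
  refine ⟨fun j n => ?_, fun j n i => ?_, fun j n k => ?_, fun j n u v => ?_,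
    fun j n t => ?_⟩ <;> simp [lb]

theorem lb_unique (f : (j n : ℕ) → Ltm j (n + 1) → Ltm (j + 1) n) (h : LbClauses f) :
    ∀ j n (t : Ltm j (n + 1)), f j n t = lb j n t
  | j, n, .holes k => by simp [h.2.2.1, lb]
  | j, n, .var i => by
      cases i using Fin.lastCases with
      | last => simp [h.1, lb]
      | cast i => simp [h.2.1, lb]
  | j, n, .app u v => by
      simp [h.2.2.2.1, lb, lb_unique f h j n u, lb_unique f h j n v]
  | j, n, .lam t => by simp [h.2.2.2.2, lb, lb_unique f h j (n + 1) t]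

theorem lb_equiv_and_unique :
    (∀ j n : ℕ, ∃ e : Ltm j (n + 1) ≃ Ltm (j + 1) n, ⇑e = lb j n) ∧
    LbClauses lb ∧
    (∀ f : (j n : ℕ) → Ltm j (n + 1) → Ltm (j + 1) n, LbClauses f → f = lb) := by
  refine ⟨fun j n => ⟨⟨lb j n, lbInv j n, lbInv_lb j n, lb_lbInv j n⟩, rfl⟩, lb_clauses, ?_⟩
  intro f hf
  funext j n t
  exact lb_unique f hf j n t
end

section
/- The maps lb are natural with respect to renamings: for every function ρ : Fin n → Fin m and every term t : Ltm j (n+1), one has lb j m (rename ρ⁺ t) = rename ρ (lb j n t), where ρ⁺ : Fin (n+1) → Fin (m+1) is defined by ρ⁺ (Fin.castSucc i) = Fin.castSucc (ρ i) and ρ⁺ (Fin.last n) = Fin.last m. (This naturality is the set-level expression of the fact that the paper's equivalence sflb_j : (∫ ⊸ Ltm_j) ≃ Ltm_{j+1} is a map of presheaves, i.e. is name-invariant.) -/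
/-- Lifting a renaming under a `lam` binder: `0 ↦ 0`, `i+1 ↦ (ρ i)+1`. -/
def lift {n m : ℕ} (ρ : Fin n → Fin m) : Fin (n + 1) → Fin (m + 1) :=
  Fin.cases (motive := fun _ => Fin (m + 1)) 0 (fun i => (ρ i).succ)

/-- Structural renaming of de Bruijn λ-terms. -/
def rename {j : ℕ} : {n m : ℕ} → (Fin n → Fin m) → Ltm j n → Ltm j m
  | _, _, ρ, .var i => .var (ρ i)
  | _, _, _, .holes k => .holes k
  | _, _, ρ, .app u v => .app (rename ρ u) (rename ρ v)
  | _, _, ρ, .lam t => .lam (rename (lift ρ) t)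

/-- Extension `ρ⁺` of a renaming to the distinguished last variable:
`ρ⁺ (castSucc i) = castSucc (ρ i)` and `ρ⁺ (last n) = last m`. -/
def plusLast {n m : ℕ} (ρ : Fin n → Fin m) : Fin (n + 1) → Fin (m + 1) :=
  Fin.lastCases (motive := fun _ => Fin (m + 1))
    (Fin.last m) (fun i => (ρ i).castSucc)

lemma lift_zero {n m : ℕ} (ρ : Fin n → Fin m) : lift ρ 0 = 0 := rfl

lemma lift_succ {n m : ℕ} (ρ : Fin n → Fin m) (i : Fin n) :
    lift ρ i.succ = (ρ i).succ := by simp [lift]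

lemma plusLast_castSucc {n m : ℕ} (ρ : Fin n → Fin m) (i : Fin n) :
    plusLast ρ i.castSucc = (ρ i).castSucc := by simp [plusLast]

lemma plusLast_last {n m : ℕ} (ρ : Fin n → Fin m) :
    plusLast ρ (Fin.last n) = Fin.last m := by simp [plusLast]

lemma lift_plusLast {n m : ℕ} (ρ : Fin n → Fin m) :
    lift (plusLast ρ) = plusLast (lift ρ) := by
  funext i
  induction i using Fin.lastCases with
  | last =>
      rw [plusLast_last, ← Fin.succ_last, lift_succ, plusLast_last, Fin.succ_last]
  | cast k =>
      rw [plusLast_castSucc]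
      induction k using Fin.cases with
      | zero => simp [lift_zero]
      | succ i =>
          rw [← Fin.succ_castSucc, lift_succ, plusLast_castSucc, lift_succ,
            Fin.succ_castSucc]

theorem lb_natural {j n m : ℕ} (ρ : Fin n → Fin m) (t : Ltm j (n + 1)) :
    lb j m (rename (plusLast ρ) t) = rename ρ (lb j n t) := by
  match t with
  | .holes k => simp [lb, rename]
  | .var i =>
      induction i using Fin.lastCases with
      | last => rw [rename, plusLast_last]; simp [lb, rename]
      | cast k => rw [rename, plusLast_castSucc]; simp [lb, rename]
  | .app u v => simp [rename, lb, lb_natural ρ u, lb_natural ρ v]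
  | .lam t => simp [rename, lb, lift_plusLast, lb_natural (lift ρ) t]
end

section
/- There is a unique family of functions pe n : Proc (n+1) → AProc n satisfying the clauses: pe nil = nil; pe (tau p) = tau (pe p); pe (par p q) = par (pe p) (pe q); pe (sum p q) = sum (pe p) (pe q); pe (nu q) = nu (pe q) (with pe on the right taken at n+1); pe (inp (Fin.last n) q) = inp1 (pe q); pe (inp (Fin.castSucc a) q) = inp0 a (pe q) for a : Fin n; pe (out (Fin.castSucc a) (Fin.castSucc b) p) = out00 a b (pe p); pe (out (Fin.castSucc a) (Fin.last n) p) = out01 a (pe p); pe (out (Fin.last n) (Fin.castSucc b) p) = out10 b (pe p); pe (out (Fin.last n) (Fin.last n) p) = out11 (pe p). Moreover each pe n is a bijection, so Proc (n+1) ≃ AProc n. (This is the set-level, de Bruijn counterpart of the paper's Structure Abstraction Principle at the nominal data type Proc of π-calculus processes, stating that (∫ ⊸ Proc) ≃ AProc, which underlies the definition of substitution nsub by nominal pattern matching.) -/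
/-- Well-scoped de Bruijn π-calculus processes with `n` free names. -/
inductive Proc : ℕ → Type where
  | nil {n : ℕ} : Proc n
  | tau {n : ℕ} : Proc n → Proc n
  | par {n : ℕ} : Proc n → Proc n → Proc n
  | sum {n : ℕ} : Proc n → Proc n → Proc n
  | nu {n : ℕ} : Proc (n + 1) → Proc n
  | inp {n : ℕ} : Fin n → Proc (n + 1) → Proc n
  | out {n : ℕ} : Fin n → Fin n → Proc n → Proc n

/-- The nullary parametricity translation of `Proc`. -/
inductive AProc : ℕ → Type where
  | nil {n : ℕ} : AProc n
  | tau {n : ℕ} : AProc n → AProc n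
  | par {n : ℕ} : AProc n → AProc n → AProc n
  | sum {n : ℕ} : AProc n → AProc n → AProc n
  | nu {n : ℕ} : AProc (n + 1) → AProc n
  | inp0 {n : ℕ} : Fin n → AProc (n + 1) → AProc n
  | inp1 {n : ℕ} : AProc (n + 1) → AProc n
  | out00 {n : ℕ} : Fin n → Fin n → AProc n → AProc n
  | out01 {n : ℕ} : Fin n → AProc n → AProc n
  | out10 {n : ℕ} : Fin n → AProc n → AProc n
  | out11 {n : ℕ} : AProc n → AProc n

/-- The defining clauses of the translation `pe : Proc (n+1) → AProc n`. -/
def PeClauses (pe : (n : ℕ) → Proc (n + 1) → AProc n) : Prop :=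
  (∀ n, pe n .nil = .nil) ∧
  (∀ n (p : Proc (n + 1)), pe n (.tau p) = .tau (pe n p)) ∧
  (∀ n (p q : Proc (n + 1)), pe n (.par p q) = .par (pe n p) (pe n q)) ∧
  (∀ n (p q : Proc (n + 1)), pe n (.sum p q) = .sum (pe n p) (pe n q)) ∧
  (∀ n (q : Proc (n + 2)), pe n (.nu q) = .nu (pe (n + 1) q)) ∧
  (∀ n (q : Proc (n + 2)), pe n (.inp (Fin.last n) q) = .inp1 (pe (n + 1) q)) ∧
  (∀ n (a : Fin n) (q : Proc (n + 2)),
    pe n (.inp a.castSucc q) = .inp0 a (pe (n + 1) q)) ∧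
  (∀ n (a b : Fin n) (p : Proc (n + 1)),
    pe n (.out a.castSucc b.castSucc p) = .out00 a b (pe n p)) ∧
  (∀ n (a : Fin n) (p : Proc (n + 1)),
    pe n (.out a.castSucc (Fin.last n) p) = .out01 a (pe n p)) ∧
  (∀ n (b : Fin n) (p : Proc (n + 1)),
    pe n (.out (Fin.last n) b.castSucc p) = .out10 b (pe n p)) ∧
  (∀ n (p : Proc (n + 1)),
    pe n (.out (Fin.last n) (Fin.last n) p) = .out11 (pe n p))

def peDef : (n : ℕ) → Proc (n + 1) → AProc n
  | _, .nil => .nil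
  | n, .tau p => .tau (peDef n p)
  | n, .par p q => .par (peDef n p) (peDef n q)
  | n, .sum p q => .sum (peDef n p) (peDef n q)
  | n, .nu q => .nu (peDef (n + 1) q)
  | n, .inp a q =>
      Fin.lastCases (.inp1 (peDef (n + 1) q)) (fun a => .inp0 a (peDef (n + 1) q)) a
  | n, .out a b p =>
      Fin.lastCases
        (Fin.lastCases (.out11 (peDef n p)) (fun b => .out10 b (peDef n p)) b)
        (fun a =>
          Fin.lastCases (.out01 a (peDef n p)) (fun b => .out00 a b (peDef n p)) b) a

theorem peDef_clauses : PeClauses peDef := by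
  refine ⟨?_, ?_, ?_, ?_, ?_, ?_, ?_, ?_, ?_, ?_, ?_⟩ <;> intros <;>
    simp [peDef, Fin.lastCases_castSucc, Fin.lastCases_last]

def apDef : (n : ℕ) → AProc n → Proc (n + 1)
  | _, .nil => .nil
  | n, .tau p => .tau (apDef n p)
  | n, .par p q => .par (apDef n p) (apDef n q)
  | n, .sum p q => .sum (apDef n p) (apDef n q)
  | n, .nu q => .nu (apDef (n + 1) q)
  | n, .inp0 a q => .inp a.castSucc (apDef (n + 1) q)
  | n, .inp1 q => .inp (Fin.last n) (apDef (n + 1) q)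
  | n, .out00 a b p => .out a.castSucc b.castSucc (apDef n p)
  | n, .out01 a p => .out a.castSucc (Fin.last n) (apDef n p)
  | n, .out10 b p => .out (Fin.last n) b.castSucc (apDef n p)
  | n, .out11 p => .out (Fin.last n) (Fin.last n) (apDef n p)

theorem pe_eq_peDef_aux (pe : (n : ℕ) → Proc (n + 1) → AProc n) (h : PeClauses pe) :
    (n : ℕ) → (p : Proc (n + 1)) → pe n p = peDef n p
  | n, .nil => by
      obtain ⟨h1, -⟩ := h
      simp [h1, peDef]
  | n, .tau p => by
      have ih := pe_eq_peDef_aux pe h n p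
      obtain ⟨-, h2, -⟩ := h
      simp [h2, peDef, ih]
  | n, .par p q => by
      have ih1 := pe_eq_peDef_aux pe h n p
      have ih2 := pe_eq_peDef_aux pe h n q
      obtain ⟨-, -, h3, -⟩ := h
      simp [h3, peDef, ih1, ih2]
  | n, .sum p q => by
      have ih1 := pe_eq_peDef_aux pe h n p
      have ih2 := pe_eq_peDef_aux pe h n q
      obtain ⟨-, -, -, h4, -⟩ := h
      simp [h4, peDef, ih1, ih2]
  | n, .nu q => by
      have ih := pe_eq_peDef_aux pe h (n + 1) q
      obtain ⟨-, -, -, -, h5, -⟩ := h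
      simp [h5, peDef, ih]
  | n, .inp a q => by
      have ih := pe_eq_peDef_aux pe h (n + 1) q
      obtain ⟨-, -, -, -, -, h6, h7, -⟩ := h
      induction a using Fin.lastCases with
      | last => simp [h6, peDef, ih, Fin.lastCases_last]
      | cast a => simp [h7, peDef, ih, Fin.lastCases_castSucc]
  | n, .out a b p => by
      have ih := pe_eq_peDef_aux pe h n p
      obtain ⟨-, -, -, -, -, -, -, h8, h9, h10, h11⟩ := h
      induction a using Fin.lastCases with
      | last =>
          induction b using Fin.lastCases with
          | last => simp [h11, peDef, ih, Fin.lastCases_last]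
          | cast b => simp [h10, peDef, ih, Fin.lastCases_last, Fin.lastCases_castSucc]
      | cast a =>
          induction b using Fin.lastCases with
          | last => simp [h9, peDef, ih, Fin.lastCases_last, Fin.lastCases_castSucc]
          | cast b => simp [h8, peDef, ih, Fin.lastCases_castSucc]

theorem pe_eq_peDef (pe : (n : ℕ) → Proc (n + 1) → AProc n) (h : PeClauses pe) :
    pe = peDef := funext fun n => funext fun p => pe_eq_peDef_aux pe h n p

theorem ap_pe : (n : ℕ) → (p : Proc (n + 1)) → apDef n (peDef n p) = p
  | _, .nil => by simp [peDef, apDef]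
  | n, .tau p => by simp [peDef, apDef, ap_pe n p]
  | n, .par p q => by simp [peDef, apDef, ap_pe n p, ap_pe n q]
  | n, .sum p q => by simp [peDef, apDef, ap_pe n p, ap_pe n q]
  | n, .nu q => by simp [peDef, apDef, ap_pe (n + 1) q]
  | n, .inp a q => by
      have ih := ap_pe (n + 1) q
      induction a using Fin.lastCases with
      | last => simp [peDef, apDef, ih, Fin.lastCases_last]
      | cast a => simp [peDef, apDef, ih, Fin.lastCases_castSucc]
  | n, .out a b p => by
      have ih := ap_pe n p
      induction a using Fin.lastCases with
      | last =>
          induction b using Fin.lastCases with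
          | last => simp [peDef, apDef, ih, Fin.lastCases_last]
          | cast b => simp [peDef, apDef, ih, Fin.lastCases_last, Fin.lastCases_castSucc]
      | cast a =>
          induction b using Fin.lastCases with
          | last => simp [peDef, apDef, ih, Fin.lastCases_last, Fin.lastCases_castSucc]
          | cast b => simp [peDef, apDef, ih, Fin.lastCases_castSucc]

theorem pe_ap : (n : ℕ) → (a : AProc n) → peDef n (apDef n a) = a
  | _, .nil => by simp [peDef, apDef]
  | n, .tau p => by simp [peDef, apDef, pe_ap n p]
  | n, .par p q => by simp [peDef, apDef, pe_ap n p, pe_ap n q]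
  | n, .sum p q => by simp [peDef, apDef, pe_ap n p, pe_ap n q]
  | n, .nu q => by simp [peDef, apDef, pe_ap (n + 1) q]
  | n, .inp0 a q => by simp [peDef, apDef, pe_ap (n + 1) q, Fin.lastCases_castSucc]
  | n, .inp1 q => by simp [peDef, apDef, pe_ap (n + 1) q, Fin.lastCases_last]
  | n, .out00 a b p => by simp [peDef, apDef, pe_ap n p, Fin.lastCases_castSucc]
  | n, .out01 a p => by
      simp [peDef, apDef, pe_ap n p, Fin.lastCases_last, Fin.lastCases_castSucc]
  | n, .out10 b p => by
      simp [peDef, apDef, pe_ap n p, Fin.lastCases_last, Fin.lastCases_castSucc]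
  | n, .out11 p => by simp [peDef, apDef, pe_ap n p, Fin.lastCases_last]

theorem pe_unique_and_bijective :
    (∃! pe : (n : ℕ) → Proc (n + 1) → AProc n, PeClauses pe) ∧
    (∀ pe : (n : ℕ) → Proc (n + 1) → AProc n, PeClauses pe →
      ∀ n, Function.Bijective (pe n)) := by
  constructor
  · exact ⟨peDef, peDef_clauses, fun pe h => pe_eq_peDef pe h⟩
  · intro pe h n
    rw [pe_eq_peDef pe h]
    exact Function.bijective_iff_has_inverse.2 ⟨apDef n, ap_pe n, pe_ap n⟩
end

section
/- The map toh commutes with the shift equivalences: for all natural numbers j and n and every term t : Ltm j (n+1), one has eb j n (toh j (n+1) t) = toh (j+1) n (lb j n t). (This is the set-level, de Bruijn counterpart of the paper's result that the nullary observational parametricity of toh_j equals toh_{j+1}, i.e. [toh_j]₀ ≡ toh_{j+1}.) -/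
/-- The impredicative HOAS encoding of λ-terms with `j` holes and `n` free variables. -/
def Henc (j n : ℕ) : Type 1 :=
  ∀ (H : Type), (Fin j → H) → (Fin n → H) → (H → H → H) → ((H → H) → H) → H

/-- The shift equivalence on HOAS encodings: exchange the distinguished last
variable with a fresh hole `0` and shift the remaining holes up by one. -/
def eb (j n : ℕ) (h : Henc j (n + 1)) : Henc (j + 1) n :=
  fun H hs vs ap lm => h H (hs ∘ Fin.succ) (Fin.snoc vs (hs 0)) ap lm

/-- The map from de Bruijn λ-terms into the HOAS encoding. -/
def toh (j : ℕ) : (n : ℕ) → Ltm j n → Henc j n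
  | _, .holes k => fun _H hs _vs _ap _lm => hs k
  | _, .var i => fun _H _hs vs _ap _lm => vs i
  | n, .app u v => fun H hs vs ap lm =>
      ap (toh j n u H hs vs ap lm) (toh j n v H hs vs ap lm)
  | n, .lam g => fun H hs vs ap lm =>
      lm (fun m => toh j (n + 1) g H hs (Fin.cases (motive := fun _ => H) m vs) ap lm)

theorem snoc_cases_swap {H : Type} {n : ℕ} (m x : H) (vs : Fin n → H) :
    Fin.snoc (Fin.cases (motive := fun _ => H) m vs) x =
      Fin.cases (motive := fun _ => H) m (Fin.snoc vs x) := by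
  funext i
  refine Fin.lastCases ?_ ?_ i
  · rw [Fin.snoc_last, ← Fin.succ_last, Fin.cases_succ, Fin.snoc_last]
  · intro k
    rw [Fin.snoc_castSucc]
    refine Fin.cases ?_ ?_ k
    · simp
    · intro k'
      rw [show Fin.castSucc k'.succ = (Fin.castSucc k').succ from rfl,
        Fin.cases_succ, Fin.cases_succ, Fin.snoc_castSucc]

theorem toh_shift_aux (j : ℕ) : (n : ℕ) → (t : Ltm j (n + 1)) →
    eb j n (toh j (n + 1) t) = toh (j + 1) n (lb j n t)
  | _, .holes k => by funext H hs vs ap lm; simp [eb, toh, lb]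
  | n, .var i => by
      refine Fin.lastCases ?_ ?_ i <;> intros <;> funext H hs vs ap lm <;>
        simp [eb, lb, toh, Fin.snoc_last, Fin.snoc_castSucc]
  | n, .app u v => by
      have ihu := toh_shift_aux j n u
      have ihv := toh_shift_aux j n v
      funext H hs vs ap lm
      have hu : toh j (n + 1) u H (hs ∘ Fin.succ) (Fin.snoc vs (hs 0)) ap lm =
          toh (j + 1) n (lb j n u) H hs vs ap lm :=
        congrFun (congrFun (congrFun (congrFun (congrFun ihu H) hs) vs) ap) lm
      have hv : toh j (n + 1) v H (hs ∘ Fin.succ) (Fin.snoc vs (hs 0)) ap lm =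
          toh (j + 1) n (lb j n v) H hs vs ap lm :=
        congrFun (congrFun (congrFun (congrFun (congrFun ihv H) hs) vs) ap) lm
      simp only [eb, toh, lb]
      rw [hu, hv]
  | n, .lam g => by
      have ih := toh_shift_aux j (n + 1) g
      funext H hs vs ap lm
      simp only [eb, toh, lb]
      congr 1
      funext m
      have := congrFun (congrFun (congrFun (congrFun (congrFun ih H) hs)
        (Fin.cases (motive := fun _ => H) m vs)) ap) lm
      simp only [eb] at this
      rw [← snoc_cases_swap]
      exact this

theorem toh_commutes_with_shift (j n : ℕ) (t : Ltm j (n + 1)) :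
    eb j n (toh j (n + 1) t) = toh (j + 1) n (lb j n t) :=
  toh_shift_aux j n t
end

section
/- For all natural numbers j and n there exists a function ubd : Henc j n → Ltm j n such that ubd (toh j n t) = t for every t : Ltm j n; in particular, toh j n : Ltm j n → Henc j n is injective. (This is the set-level, de Bruijn counterpart of the paper's roundtrip theorem rdt-ulc : ∀ t : Ltm_j, ubd (toh_j t) ≡ t, connecting the nominal syntax of the untyped λ-calculus to its HOAS Π-encoding.) -/
/-- Raw (possibly ill-scoped) de Bruijn terms with `j` holes. -/
inductive Raw (j : ℕ) : Type where
  | holes : Fin j → Raw j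
  | var : ℕ → Raw j
  | app : Raw j → Raw j → Raw j
  | lam : Raw j → Raw j

/-- Read a raw term back as a well-scoped term, if possible. -/
def toLtm (j : ℕ) : (m : ℕ) → Raw j → Option (Ltm j m)
  | _, .holes k => some (.holes k)
  | m, .var i => if h : i < m then some (.var ⟨i, h⟩) else none
  | m, .app u v => do pure (.app (← toLtm j m u) (← toLtm j m v))
  | m, .lam r => (toLtm j (m + 1) r).map .lam

/-- The key roundtrip lemma, with a general environment invariant. -/
theorem toh_toLtm (j : ℕ) : ∀ (m : ℕ) (t : Ltm j m) (d : ℕ) (ρ : Fin m → ℕ → Raw j),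
    (∀ (i : Fin m) (k : ℕ), ρ i (d + k) = .var ((i : ℕ) + k)) →
    toLtm j m (toh j m t (ℕ → Raw j) (fun k _ => .holes k) ρ
      (fun a b d' => .app (a d') (b d')) (fun f d' => .lam (f (fun d'' => .var (d'' - d' - 1)) (d' + 1))) d)
      = some t := by
  intro m t
  induction t with
  | holes k => intro d ρ hρ; rfl
  | var i =>
    intro d ρ hρ
    have h := hρ i 0
    simp only [Nat.add_zero] at h
    show toLtm j _ (ρ i d) = _
    rw [h]
    simp [toLtm, i.isLt]
  | app u v ihu ihv =>
    intro d ρ hρ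
    show toLtm j _ (.app _ _) = _
    simp [toLtm, ihu d ρ hρ, ihv d ρ hρ]
  | @lam m g ih =>
    intro d ρ hρ
    show ((toLtm j (m + 1) (toh j (m+1) g (ℕ → Raw j) (fun k _ => .holes k)
        (Fin.cases (motive := fun _ => ℕ → Raw j) (fun d'' => .var (d'' - d - 1)) ρ)
        (fun a b d' => .app (a d') (b d'))
        (fun f d' => .lam (f (fun d'' => .var (d'' - d' - 1)) (d' + 1))) (d+1))).map Ltm.lam) = _
    rw [ih (d + 1) _ ?_]
    · rfl
    · intro i k
      refine Fin.cases ?_ ?_ i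
      · show Raw.var (d + 1 + k - (d + 1)) = _
        simp
      · intro i'
        show ρ i' (d + 1 + k) = _
        have := hρ i' (1 + k)
        rw [← Nat.add_assoc] at this
        rw [this]
        simp [Nat.add_assoc, Nat.add_comm 1 k]

/-- Decode an encoded term. -/
noncomputable def ubd0 (j n : ℕ) (e : Henc j n) : Ltm j n :=
  (toLtm j n (e (ℕ → Raw j) (fun k _ => .holes k) (fun i d => .var ((i : ℕ) + (d - n)))
      (fun a b d' => .app (a d') (b d'))
      (fun f d' => .lam (f (fun d'' => .var (d'' - d' - 1)) (d' + 1))) n)).getD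
    (.lam (.var ⟨0, Nat.succ_pos n⟩))

theorem ubd0_toh (j n : ℕ) (t : Ltm j n) : ubd0 j n (toh j n t) = t := by
  unfold ubd0
  rw [toh_toLtm j n t n _ ?_]
  · rfl
  · intro i k
    simp

theorem toh_roundtrip (j n : ℕ) :
    (∃ ubd : Henc j n → Ltm j n, ∀ t : Ltm j n, ubd (toh j n t) = t) ∧
    Function.Injective (toh j n) := by
  refine ⟨⟨ubd0 j n, ubd0_toh j n⟩, ?_⟩
  intro a b h
  have := congrArg (ubd0 j n) h
  rwa [ubd0_toh, ubd0_toh] at this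
end

section
/- Swapping the two distinguished names commutes with double abstraction: for every t : Ltm j (n+2), lb (j+1) n (lb j (n+1) (rename τ t)) = hswap (lb (j+1) n (lb j (n+1) t)), where τ : Fin (n+2) → Fin (n+2) is the transposition exchanging the indices n and n+1 and fixing all other indices, and hswap : Ltm (j+2) n → Ltm (j+2) n is the structural map that swaps holes 0 and 1 (hswap (holes 0) = holes 1, hswap (holes 1) = holes 0, hswap (holes k) = holes k for k ≥ 2, hswap (var i) = var i, and hswap commutes with app and lam). (This is the set-level, de Bruijn counterpart of the paper's flip construction, derived from the bridge-commutation instance of the Structure Abstraction Principle (x ⊸ y ⊸ A) ≃ (y ⊸ x ⊸ A) applied to Ltm.) -/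
/-- The transposition of `Fin (n+2)` exchanging the indices `n` and `n+1`
and fixing all other indices. -/
def tau (n : ℕ) : Fin (n + 2) → Fin (n + 2) :=
  ⇑(Equiv.swap ((Fin.last n).castSucc) (Fin.last (n + 1)))

/-- The structural map swapping holes `0` and `1` and leaving everything
else unchanged. -/
def hswap {j : ℕ} : {n : ℕ} → Ltm (j + 2) n → Ltm (j + 2) n
  | _, .holes k => .holes (Equiv.swap 0 1 k)
  | _, .var i => .var i
  | _, .app u v => .app (hswap u) (hswap v)
  | _, .lam t => .lam (hswap t)


lemma lift_tau (n : ℕ) : lift (tau n) = tau (n + 1) := by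
  funext i
  induction i using Fin.cases with
  | zero =>
    simp only [lift, Fin.cases_zero, tau]
    rw [Equiv.swap_apply_of_ne_of_ne]
    · exact (Fin.castSucc_ne_zero_iff.mpr (Fin.last_pos).ne').symm
    · exact (Fin.last_pos).ne
  | succ i =>
    simp only [lift, Fin.cases_succ, tau]
    have h := (Fin.succ_injective (n + 2)).swap_apply
      (x := (Fin.last n).castSucc) (y := Fin.last (n + 1)) (z := i)
    rw [show ((Fin.last n).castSucc).succ = (Fin.last (n+1)).castSucc by
          rw [Fin.succ_castSucc]; rfl,
        show (Fin.last (n+1)).succ = Fin.last (n+2) from rfl] at h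
    exact h.symm

theorem lb_lb_swap_aux (j : ℕ) : ∀ n (t : Ltm j (n + 2)),
    lb (j + 1) n (lb j (n + 1) (rename (tau n) t)) =
      hswap (lb (j + 1) n (lb j (n + 1) t))
  | n, .holes k => by
      simp only [rename, lb, hswap]
      rw [Equiv.swap_apply_of_ne_of_ne (Fin.succ_ne_zero _)]
      exact fun h => Fin.succ_ne_zero _ (Fin.succ_injective _ h)
  | n, .var i => by
      induction i using Fin.lastCases with
      | last =>
        have h1 : tau n (Fin.last (n+1)) = (Fin.last n).castSucc :=
          Equiv.swap_apply_right _ _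
        simp [rename, h1, lb, hswap, Fin.lastCases_castSucc, Fin.lastCases_last]
      | cast i =>
        induction i using Fin.lastCases with
        | last =>
          have h1 : tau n ((Fin.last n).castSucc) = Fin.last (n+1) :=
            Equiv.swap_apply_left _ _
          simp [rename, h1, lb, hswap, Fin.lastCases_castSucc, Fin.lastCases_last]
        | cast i =>
          have h1 : tau n (i.castSucc.castSucc) = i.castSucc.castSucc := by
            apply Equiv.swap_apply_of_ne_of_ne
            · exact (Fin.castSucc_injective _).ne (Fin.castSucc_lt_last i).ne
            · exact (Fin.castSucc_lt_last _).ne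
          simp [rename, h1, lb, hswap, Fin.lastCases_castSucc]
  | n, .app u v => by
      simp only [rename, lb, hswap, lb_lb_swap_aux j n u, lb_lb_swap_aux j n v]
  | n, .lam t => by
      simp only [rename, lb, hswap, lift_tau, lb_lb_swap_aux j (n+1) t]

theorem lb_lb_swap (j n : ℕ) (t : Ltm j (n + 2)) :
    lb (j + 1) n (lb j (n + 1) (rename (tau n) t)) =
      hswap (lb (j + 1) n (lb j (n + 1) t)) :=
  lb_lb_swap_aux j n t
end
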